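/- Let Δ > 0, η ≥ 2, and h_η(q) = Δ²((η+2−2q)³ − (η+2−4q)³)/6. For 2 ≤ η < 8/3, define H(q) = h_η(q) for q ∈ [0, (9η+4)/28] and H(q) = (h_η(1) − h_η((9η+4)/28))/(1 − (9η+4)/28) · (q − (9η+4)/28) + h_η((9η+4)/28) for q ∈ [(9η+4)/28, 1]. Then H is concave on [0,1] and H(q) ≥ h_η(q) for all q ∈ [0,1]. -/

import Mathlib

/-!
The line through `(1, h_η 1)` touching the graph at `t = (9η+4)/28` is the tangent there:
`h_η q = h_η t + h_η' t (q - t) + (28Δ²/3) (q - t)² (q - 1)`.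
Hence `H` is differentiable with derivative `h_η' (min q t)`, which is antitone
because `h_η'' ≤ 0` on `(-∞, 3(η+2)/14] ∋ t`; and the cubic remainder is `≤ 0` for
`q ≤ 1`, so the tangent line lies above `h_η` on `[t, 1]`.
-/

open Set

section TangentExtension

variable {f f' : ℝ → ℝ} {t : ℝ}

theorem hasDerivAt_ite_le_tangent (hf : ∀ x, HasDerivAt f (f' x) x) (x : ℝ) :
    HasDerivAt (fun y => if y ≤ t then f y else f' t * (y - t) + f t) (f' (min x t)) x := by
  set g := fun y => if y ≤ t then f y else f' t * (y - t) + f t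
  have hg_left : ∀ y ∈ Iic t, g y = f y := fun y hy => if_pos hy
  have hg_right : ∀ y ∈ Ici t, g y = f' t * (y - t) + f t := by
    intro y hy
    rcases (mem_Ici.mp hy).eq_or_lt with rfl | hty
    · simp [g]
    · exact if_neg (not_le.mpr hty)
  have hline : ∀ y, HasDerivAt (fun y => f' t * (y - t) + f t) (f' t) y := fun y => by
    simpa using (((hasDerivAt_id y).sub_const t).const_mul (f' t)).add_const (f t)
  rcases lt_trichotomy x t with hxt | rfl | hxt
  · rw [min_eq_left hxt.le]
    exact (hf x).congr_of_eventuallyEq <|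
      Filter.eventually_of_mem (Iio_mem_nhds hxt) fun y hy => hg_left y (Iio_subset_Iic_self hy)
  · rw [min_self]
    have hl : HasDerivWithinAt g (f' x) (Iic x) x :=
      (hf x).hasDerivWithinAt.congr hg_left (hg_left x self_mem_Iic)
    have hr : HasDerivWithinAt g (f' x) (Ici x) x :=
      (hline x).hasDerivWithinAt.congr hg_right (hg_right x self_mem_Ici)
    simpa only [Iic_union_Ici, hasDerivWithinAt_univ] using hl.union hr
  · rw [min_eq_right hxt.le]
    exact (hline x).congr_of_eventuallyEq <|
      Filter.eventually_of_mem (Ioi_mem_nhds hxt) fun y hy => hg_right y (Ioi_subset_Ici_self hy)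

theorem concaveOn_ite_le_tangent (hf : ∀ x, HasDerivAt f (f' x) x)
    (hf' : AntitoneOn f' (Iic t)) :
    ConcaveOn ℝ univ (fun y => if y ≤ t then f y else f' t * (y - t) + f t) := by
  have hg := hasDerivAt_ite_le_tangent hf (t := t)
  refine Antitone.concaveOn_univ_of_deriv (fun x => (hg x).differentiableAt) fun x y hxy => ?_
  rw [(hg x).deriv, (hg y).deriv]
  exact hf' (min_le_right x t) (min_le_right y t) (min_le_min_right t hxy)

end TangentExtension

section HEta

variable (Δ η : ℝ)

noncomputable def hEta (q : ℝ) : ℝ := Δ ^ 2 * ((η + 2 - 2 * q) ^ 3 - (η + 2 - 4 * q) ^ 3) / 6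

def hEtaDeriv (q : ℝ) : ℝ := Δ ^ 2 * ((η + 2) ^ 2 - 12 * (η + 2) * q + 28 * q ^ 2)

theorem hasDerivAt_hEta (x : ℝ) : HasDerivAt (hEta Δ η) (hEtaDeriv Δ η x) x := by
  have hlin : ∀ c : ℝ, HasDerivAt (fun q : ℝ => η + 2 - c * q) (-c) x := fun c => by
    simpa using ((hasDerivAt_id x).const_mul c).const_sub (η + 2)
  refine ((((hlin 2).fun_pow 3).sub ((hlin 4).fun_pow 3)).const_mul (Δ ^ 2)).div_const 6
    |>.congr_deriv ?_
  simp only [hEtaDeriv]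
  ring

theorem hEtaDeriv_antitoneOn : AntitoneOn (hEtaDeriv Δ η) (Iic (3 * (η + 2) / 14)) := by
  intro u hu v hv huv
  have hsum : 28 * (u + v) ≤ 12 * (η + 2) := by
    linarith [mem_Iic.mp hu, mem_Iic.mp hv]
  have hdiff : hEtaDeriv Δ η u - hEtaDeriv Δ η v
      = Δ ^ 2 * ((v - u) * (12 * (η + 2) - 28 * (u + v))) := by
    simp only [hEtaDeriv]
    ring
  have : 0 ≤ Δ ^ 2 * ((v - u) * (12 * (η + 2) - 28 * (u + v))) :=
    mul_nonneg (sq_nonneg Δ) (mul_nonneg (sub_nonneg.mpr huv) (sub_nonneg.mpr hsum))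
  linarith

theorem hEta_eq_tangent_add (q : ℝ) :
    hEta Δ η q = hEtaDeriv Δ η ((9 * η + 4) / 28) * (q - (9 * η + 4) / 28)
      + hEta Δ η ((9 * η + 4) / 28)
      + 28 * Δ ^ 2 / 3 * (q - (9 * η + 4) / 28) ^ 2 * (q - 1) := by
  simp only [hEta, hEtaDeriv]
  ring

theorem hEta_le_tangent {q : ℝ} (hq : q ≤ 1) :
    hEta Δ η q ≤ hEtaDeriv Δ η ((9 * η + 4) / 28) * (q - (9 * η + 4) / 28)
      + hEta Δ η ((9 * η + 4) / 28) := by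
  have : 28 * Δ ^ 2 / 3 * (q - (9 * η + 4) / 28) ^ 2 * (q - 1) ≤ 0 :=
    mul_nonpos_of_nonneg_of_nonpos (by positivity) (by linarith)
  linarith [hEta_eq_tangent_add Δ η q]

theorem hEta_chord_slope (hη : η < 8 / 3) :
    (hEta Δ η 1 - hEta Δ η ((9 * η + 4) / 28)) / (1 - (9 * η + 4) / 28)
      = hEtaDeriv Δ η ((9 * η + 4) / 28) := by
  rw [div_eq_iff (by linarith), hEta_eq_tangent_add Δ η 1]
  ring

end HEta

theorem stmt_17_general (Δ η : ℝ) (hη₂ : η < 8 / 3)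
    (h H : ℝ → ℝ)
    (hh : ∀ q, h q = Δ ^ 2 * ((η + 2 - 2 * q) ^ 3 - (η + 2 - 4 * q) ^ 3) / 6)
    (hH : ∀ q, H q =
      if q ≤ (9 * η + 4) / 28 then h q
      else (h 1 - h ((9 * η + 4) / 28)) / (1 - (9 * η + 4) / 28)
            * (q - (9 * η + 4) / 28) + h ((9 * η + 4) / 28)) :
    ConcaveOn ℝ (Set.Icc (0 : ℝ) 1) H ∧
    ∀ q ∈ Set.Icc (0 : ℝ) 1, h q ≤ H q := by
  set t := (9 * η + 4) / 28 with ht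
  obtain rfl : h = hEta Δ η := funext hh
  obtain rfl : H = fun q => if q ≤ t then hEta Δ η q
      else hEtaDeriv Δ η t * (q - t) + hEta Δ η t := by
    funext q
    rw [hH, hEta_chord_slope Δ η hη₂]
  refine ⟨(concaveOn_ite_le_tangent (hasDerivAt_hEta Δ η) ?_).subset (subset_univ _)
    (convex_Icc 0 1), fun q hq => ?_⟩
  · exact (hEtaDeriv_antitoneOn Δ η).mono (Iic_subset_Iic.mpr (by rw [ht]; linarith))
  · dsimp only
    split_ifs
    · exact le_rfl
    · exact hEta_le_tangent Δ η hq.2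

theorem stmt_17 (Δ η : ℝ) (hΔ : 0 < Δ) (hη₁ : 2 ≤ η) (hη₂ : η < 8 / 3)
    (h H : ℝ → ℝ)
    (hh : ∀ q, h q = Δ ^ 2 * ((η + 2 - 2 * q) ^ 3 - (η + 2 - 4 * q) ^ 3) / 6)
    (hH : ∀ q, H q =
      if q ≤ (9 * η + 4) / 28 then h q
      else (h 1 - h ((9 * η + 4) / 28)) / (1 - (9 * η + 4) / 28)
            * (q - (9 * η + 4) / 28) + h ((9 * η + 4) / 28)) :
    ConcaveOn ℝ (Set.Icc (0 : ℝ) 1) H ∧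
    ∀ q ∈ Set.Icc (0 : ℝ) 1, h q ≤ H q :=
  stmt_17_general Δ η hη₂ h H hh hH
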